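/- arXiv:2006.00620 — 2 statements merged into one kernel-verified Lean document; each statement's English description precedes it below -/
import Mathlib

section
/- Let q, l ≥ 0 be integers with l ≥ q, and let m ≥ 1 be an integer. Then the series of hyperharmonic numbers satisfies Σ_{n=1}^∞ h_n^{(q)} / ((n+m)·C(n+m+l, l)) = Σ_{j=0}^{l−q} (−1)^j · C(l−q, j) · H_{m+j}/(m+j) = (H_{m+l−q} − H_{l−q}) / (m·C(m+l−q, l−q)). -/
/-!
With `w_l(x) = 1 / (x * C(x + l, l)) = l! / (x (x + 1) ⋯ (x + l))` one has
`w_l(x) - w_l(x + 1) = w_{l+1}(x)`, so the tails of `∑ w_{l+1}` telescope: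
`∑_{n ≥ k} w_{l+1}(n + m) = w_l(k + m)`. As `h_n^{(q+1)} = ∑_{k ≤ n} h_k^{(q)}`, interchanging the
nonnegative double sum lowers `q` and `l` together, which reduces everything to `q = 0`.
There the same difference relation shows that the series `∑_n w_L(n + m) / n` and the closed form
`(H_{m+L} - H_L) w_L(m)` both satisfy `X_{L+1}(m) = X_L(m) - X_L(m + 1)`, starting from
`∑_n 1 / (n (n + m)) = H_m / m`; iterating the recurrence produces the alternating binomial sum.
-/

open Finset Real

/-- The generalized harmonic number `H_n^{(p)} = ∑_{k=1}^n 1/k^p`. -/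
noncomputable def gH (p : ℤ) (n : ℕ) : ℝ := ∑ k ∈ Finset.Icc 1 n, ((k : ℝ) ^ p)⁻¹

/-- The generalized hyperharmonic number `H_n^{(p,q)}`:
`H_n^{(p,0)} = 1/n^p` (with `H_0^{(p,q)} = 0`) and
`H_n^{(p,q)} = ∑_{k=1}^n H_k^{(p,q-1)}` for `q ≥ 1`. -/
noncomputable def gHH (p : ℤ) : ℕ → ℕ → ℝ
  | 0, n => if n = 0 then 0 else ((n : ℝ) ^ p)⁻¹
  | q + 1, n => ∑ k ∈ Finset.Icc 1 n, gHH p q k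

/-- Euler sum of generalized harmonic numbers `ζ_{H^{(p)}}(r) = ∑_{n≥1} H_n^{(p)}/n^r`. -/
noncomputable def eulerSum (p r : ℤ) : ℝ := ∑' n : ℕ+, gH p n / (n : ℝ) ^ r

/-- Euler sum of generalized hyperharmonic numbers
`ζ_{H^{(p,q)}}(r) = ∑_{n≥1} H_n^{(p,q)}/n^r`. -/
noncomputable def eulerSumHH (p : ℤ) (q : ℕ) (r : ℤ) : ℝ := ∑' n : ℕ+, gHH p q n / (n : ℝ) ^ r

/-- Riemann zeta value at an integer argument, `ζ(s) = ∑_{n≥1} 1/n^s`. -/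
noncomputable def zv (s : ℤ) : ℝ := ∑' n : ℕ+, ((n : ℝ) ^ s)⁻¹

/-- Unsigned Stirling numbers of the first kind, defined by
`x(x+1)⋯(x+q-1) = ∑_{k=0}^q [q,k] x^k`, i.e. `[n+1,k] = [n,k-1] + n·[n,k]`. -/
def stirlingFirst : ℕ → ℕ → ℕ
  | 0, 0 => 1
  | 0, _ + 1 => 0
  | _ + 1, 0 => 0
  | n + 1, k + 1 => stirlingFirst n k + n * stirlingFirst n (k + 1)

/-- The series `μ(r,j) = ∑_{n≥1} 1/(n^r (n+j))`. -/
noncomputable def mu (r j : ℕ) : ℝ := ∑' n : ℕ+, 1 / ((n : ℝ) ^ r * ((n : ℝ) + j))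

/-- `e_j(n+1, n+2, …, n+q)`: the `j`-th elementary symmetric polynomial
evaluated at the numbers `n+1, …, n+q`. -/
noncomputable def esymmVal (n q j : ℕ) : ℝ :=
  ∑ s ∈ Finset.powersetCard j (Finset.Icc 1 q), ∏ i ∈ s, ((n : ℝ) + i)

open Filter Topology

lemma hasSum_sub_succ_of_antitone {f : ℕ → ℝ} {a : ℝ} (hf : Antitone f)
    (ha : Tendsto f atTop (𝓝 a)) : HasSum (fun n ↦ f n - f (n + 1)) (f 0 - a) := by
  rw [hasSum_iff_tendsto_nat_of_nonneg fun n ↦ sub_nonneg.2 (hf n.le_succ)]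
  simp_rw [sum_range_sub']
  exact tendsto_const_nhds.sub ha

lemma hasSum_sub_add_of_antitone {f : ℕ → ℝ} (hf : Antitone f)
    (h0 : Tendsto f atTop (𝓝 0)) (m : ℕ) :
    HasSum (fun n ↦ f n - f (n + m)) (∑ j ∈ range m, f j) := by
  have hshift (j : ℕ) : HasSum (fun n ↦ f (n + j) - f (n + (j + 1))) (f j) := by
    convert hasSum_sub_succ_of_antitone (f := fun n ↦ f (n + j))
      (fun a b h ↦ hf (by omega)) (h0.comp (tendsto_add_atTop_nat j)) using 1
    · simp only [add_right_comm _ 1 j, add_assoc]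
    · simp
  convert hasSum_sum fun j _ ↦ hshift j using 1
  funext n
  rw [sum_range_sub' (fun j ↦ f (n + j)), add_zero]

lemma hasSum_sum_range_mul_of_nonneg {a b B : ℕ → ℝ} {s : ℝ} (ha : 0 ≤ a) (hb : 0 ≤ b)
    (hB : ∀ k, HasSum (fun j ↦ b (j + k)) (B k)) (hs : HasSum (fun k ↦ a k * B k) s) :
    HasSum (fun n ↦ (∑ k ∈ range (n + 1), a k) * b n) s := by
  set f : ℕ × ℕ → ℝ := fun p ↦ a p.1 * b (p.2 + p.1)
  have hrows (k : ℕ) : HasSum (fun j ↦ f (k, j)) (a k * B k) := (hB k).mul_left (a k)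
  have hf : Summable f := (summable_prod_of_nonneg fun p ↦ mul_nonneg (ha _) (hb _)).2
    ⟨fun k ↦ (hrows k).summable, hs.summable.congr fun k ↦ (hrows k).tsum_eq.symm⟩
  have hfs : HasSum f s := by
    simpa only [(hf.hasSum.prod_fiberwise hrows).unique hs] using hf.hasSum
  refine (HasAntidiagonal.sigmaAntidiagonalEquivProd.hasSum_iff.2 hfs).sigma fun n ↦ ?_
  convert hasSum_fintype _ using 1
  simp only [Function.comp_apply, HasAntidiagonal.sigmaAntidiagonalEquivProd_apply]
  rw [sum_coe_sort (antidiagonal n) f, Nat.sum_antidiagonal_eq_sum_range_succ_mk, sum_mul]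
  refine sum_congr rfl fun k hk ↦ ?_
  simp [f, Nat.sub_add_cancel (mem_range_succ_iff.1 hk)]

lemma eq_sum_alternating_choose_of_sub_succ (X : ℕ → ℕ → ℝ)
    (hX : ∀ l m, m ≠ 0 → X (l + 1) m = X l m - X l (m + 1)) (l : ℕ) {m : ℕ} (hm : m ≠ 0) :
    X l m = ∑ j ∈ range (l + 1), (-1) ^ j * (l.choose j : ℝ) * X 0 (m + j) := by
  induction l generalizing m with
  | zero => simp
  | succ l ih =>
    set g : ℕ → ℝ := fun j ↦ (-1) ^ j * (l.choose j : ℝ) * X 0 (m + j)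
    have hg : ∑ j ∈ range (l + 1), g j = ∑ j ∈ range (l + 2), g j := by
      simp [sum_range_succ _ (l + 1), g]
    rw [hX l m hm, ih hm, ih (m := m + 1) (by omega), hg, sum_range_succ' g,
      sum_range_succ' _ (l + 1)]
    simp only [g, Nat.choose_succ_succ', Nat.cast_add, pow_succ, ← add_assoc, add_right_comm m 1,
      mul_add, add_mul, sum_add_distrib, mul_neg, mul_one, neg_mul, sum_neg_distrib,
      pow_zero, Nat.choose_zero_right, Nat.cast_one, add_zero, one_mul]
    ring

-- At `x = 0` this is the junk value `0⁻¹ = 0`, hence the hypotheses `x ≠ 0` below.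
noncomputable def binomWeight (l x : ℕ) : ℝ := ((x : ℝ) * (x + l).choose l)⁻¹

section binomWeight

variable {l x : ℕ}

lemma binomWeight_zero_left (x : ℕ) : binomWeight 0 x = (x : ℝ)⁻¹ := by
  simp [binomWeight]

lemma binomWeight_nonneg (l x : ℕ) : 0 ≤ binomWeight l x := by
  unfold binomWeight; positivity

lemma binomWeight_le_inv (l x : ℕ) : binomWeight l x ≤ (x : ℝ)⁻¹ := by
  rcases x.eq_zero_or_pos with rfl | hx
  · simp [binomWeight]
  refine inv_anti₀ (by positivity) (le_mul_of_one_le_right (by positivity) ?_)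
  exact_mod_cast Nat.choose_pos (Nat.le_add_left l x)

lemma tendsto_binomWeight (l : ℕ) : Tendsto (binomWeight l) atTop (𝓝 0) :=
  squeeze_zero (binomWeight_nonneg l) (binomWeight_le_inv l)
    (tendsto_inv_atTop_zero.comp tendsto_natCast_atTop_atTop)

lemma binomWeight_succ_right (hx : x ≠ 0) :
    binomWeight l (x + 1) * (x + l + 1) = binomWeight l x * x := by
  have h : ((x + l).choose l : ℝ) * (x + l + 1) = (x + 1 + l).choose l * (x + 1) := by
    have := Nat.choose_mul_succ_eq (x + l) l
    rw [show x + l + 1 - l = x + 1 by omega, show x + l + 1 = x + 1 + l by omega] at this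
    rw [show (x : ℝ) + l + 1 = x + 1 + l by ring]
    exact_mod_cast this
  have hc : ((x + l).choose l : ℝ) ≠ 0 := by exact_mod_cast (Nat.choose_pos (by omega)).ne'
  have hc' : ((x + 1 + l).choose l : ℝ) ≠ 0 := by exact_mod_cast (Nat.choose_pos (by omega)).ne'
  have hx' : (x : ℝ) ≠ 0 := by exact_mod_cast hx
  unfold binomWeight
  push_cast
  field_simp
  linear_combination h

lemma binomWeight_succ_left (hx : x ≠ 0) :
    binomWeight (l + 1) x * (x + l + 1) = binomWeight l x * (l + 1) := by
  have h : ((x + l).choose l : ℝ) * (x + l + 1) = (x + (l + 1)).choose (l + 1) * (l + 1) := by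
    have := Nat.add_one_mul_choose_eq (x + l) l
    rw [show x + l + 1 = x + (l + 1) by omega] at this
    rw [show (x : ℝ) + l + 1 = ((x + l + 1 : ℕ) : ℝ) by push_cast; ring, mul_comm]
    exact_mod_cast this
  have hc : ((x + l).choose l : ℝ) ≠ 0 := by exact_mod_cast (Nat.choose_pos (by omega)).ne'
  have hc' : ((x + (l + 1)).choose (l + 1) : ℝ) ≠ 0 := by
    exact_mod_cast (Nat.choose_pos (by omega)).ne'
  have hx' : (x : ℝ) ≠ 0 := by exact_mod_cast hx
  unfold binomWeight
  field_simp
  linear_combination h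

lemma binomWeight_sub_succ_right (hx : x ≠ 0) :
    binomWeight l x - binomWeight l (x + 1) = binomWeight (l + 1) x := by
  have hxl : (x : ℝ) + l + 1 ≠ 0 := by positivity
  have h1 := binomWeight_succ_right (l := l) hx
  have h2 := binomWeight_succ_left (l := l) hx
  apply mul_right_cancel₀ hxl
  linear_combination -h1 - h2

end binomWeight

lemma antitone_binomWeight_add (l : ℕ) {k : ℕ} (hk : k ≠ 0) :
    Antitone fun n ↦ binomWeight l (n + k) :=
  antitone_nat_of_succ_le fun n ↦ sub_nonneg.1 <| by
    rw [add_right_comm, binomWeight_sub_succ_right (by omega)]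
    exact binomWeight_nonneg _ _

lemma hasSum_binomWeight_succ_left (l : ℕ) {k : ℕ} (hk : k ≠ 0) :
    HasSum (fun n ↦ binomWeight (l + 1) (n + k)) (binomWeight l k) := by
  convert hasSum_sub_succ_of_antitone (antitone_binomWeight_add l hk)
    ((tendsto_binomWeight l).comp (tendsto_add_atTop_nat k)) using 1
  · funext n
    rw [add_right_comm, binomWeight_sub_succ_right (by omega)]
  · simp

lemma gH_one_eq_sum_range (n : ℕ) : gH 1 n = ∑ j ∈ range n, ((j : ℝ) + 1)⁻¹ := by
  rw [gH, ← Ico_add_one_right_eq_Icc, sum_Ico_eq_sum_range]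
  simp [add_comm]

lemma gH_one_succ (n : ℕ) : gH 1 (n + 1) = gH 1 n + ((n : ℝ) + 1)⁻¹ := by
  simp only [gH_one_eq_sum_range, sum_range_succ]

lemma hasSum_inv_mul_inv_add {m : ℕ} (hm : m ≠ 0) :
    HasSum (fun n : ℕ ↦ (n : ℝ)⁻¹ * (n + m : ℝ)⁻¹) (gH 1 m / m) := by
  have hm' : (m : ℝ) ≠ 0 := by exact_mod_cast hm
  have hsum := (hasSum_sub_add_of_antitone (antitone_binomWeight_add 0 one_ne_zero)
    ((tendsto_binomWeight 0).comp (tendsto_add_atTop_nat 1)) m).mul_left (m : ℝ)⁻¹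
  rw [← hasSum_nat_add_iff' 1]
  simp only [range_one, sum_singleton, Nat.cast_zero, inv_zero, zero_mul, sub_zero]
  rw [show gH 1 m / m = (m : ℝ)⁻¹ * ∑ j ∈ range m, binomWeight 0 (j + 1) by
    simp [gH_one_eq_sum_range, binomWeight_zero_left, div_eq_inv_mul]]
  refine hsum.congr_fun fun n ↦ ?_
  simp only [binomWeight_zero_left]
  push_cast
  field_simp
  ring

noncomputable def closedForm (l m : ℕ) : ℝ := (gH 1 (m + l) - gH 1 l) * binomWeight l m

lemma closedForm_zero_left (m : ℕ) : closedForm 0 m = gH 1 m / m := by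
  simp [closedForm, binomWeight_zero_left, gH, div_eq_mul_inv]

lemma closedForm_succ_left (l : ℕ) {m : ℕ} (hm : m ≠ 0) :
    closedForm (l + 1) m = closedForm l m - closedForm l (m + 1) := by
  have hs : (m : ℝ) + l + 1 ≠ 0 := by positivity
  simp only [closedForm, show m + (l + 1) = m + l + 1 by omega, show m + 1 + l = m + l + 1 by omega,
    gH_one_succ, eq_div_of_mul_eq hs (binomWeight_succ_right hm),
    eq_div_of_mul_eq hs (binomWeight_succ_left hm)]
  push_cast
  field_simp
  ring

lemma hasSum_inv_mul_binomWeight (l : ℕ) {m : ℕ} (hm : m ≠ 0) :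
    HasSum (fun n : ℕ ↦ (n : ℝ)⁻¹ * binomWeight l (n + m)) (closedForm l m) := by
  induction l generalizing m with
  | zero =>
    rw [closedForm_zero_left]
    simpa [binomWeight_zero_left] using hasSum_inv_mul_inv_add hm
  | succ l ih =>
    rw [closedForm_succ_left l hm]
    refine ((ih hm).sub (ih (m := m + 1) (by omega))).congr_fun fun n ↦ ?_
    rw [← mul_sub, ← add_assoc, binomWeight_sub_succ_right (by omega)]

lemma gHH_apply_zero (p : ℤ) (q : ℕ) : gHH p q 0 = 0 := by
  cases q <;> simp [gHH]

lemma gHH_nonneg (p : ℤ) (q n : ℕ) : 0 ≤ gHH p q n := by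
  induction q generalizing n with
  | zero => unfold gHH; split_ifs <;> positivity
  | succ q ih => exact sum_nonneg fun k _ ↦ ih k

lemma gHH_one_zero (n : ℕ) : gHH 1 0 n = (n : ℝ)⁻¹ := by
  cases n <;> simp [gHH]

lemma gHH_succ_eq_sum_range (p : ℤ) (q n : ℕ) :
    gHH p (q + 1) n = ∑ k ∈ range (n + 1), gHH p q k := by
  rw [gHH, ← Ico_add_one_right_eq_Icc, sum_Ico_eq_sum_range, sum_range_succ']
  simp [gHH_apply_zero, add_comm]

lemma hasSum_gHH_mul_binomWeight {q l m : ℕ} (hql : q ≤ l) (hm : m ≠ 0) :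
    HasSum (fun n ↦ gHH 1 q n * binomWeight l (n + m)) (closedForm (l - q) m) := by
  induction q generalizing l with
  | zero => simpa [gHH_one_zero] using hasSum_inv_mul_binomWeight l hm
  | succ q ih =>
    obtain ⟨l, rfl⟩ : ∃ l', l = l' + 1 := ⟨l - 1, by omega⟩
    simp only [gHH_succ_eq_sum_range, show l + 1 - (q + 1) = l - q by omega]
    refine hasSum_sum_range_mul_of_nonneg (gHH_nonneg 1 q) (fun n ↦ binomWeight_nonneg _ _)
      (fun k ↦ ?_) (ih (by omega))
    simpa only [add_assoc] using hasSum_binomWeight_succ_left l (k := k + m) (by omega)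

/-- Closed forms for the series of hyperharmonic numbers with reciprocal
binomial coefficients, `l ≥ q`, `m ≥ 1`. -/
theorem stmt_8 (q l m : ℕ) (hlq : q ≤ l) (hm : 1 ≤ m) :
    (∑' n : ℕ+, gHH 1 q n / (((n : ℝ) + m) * ((((n : ℕ) + m + l).choose l : ℕ) : ℝ))
        = ∑ j ∈ Finset.range (l - q + 1),
            (-1 : ℝ) ^ j * ((l - q).choose j : ℝ) * gH 1 (m + j) / ((m : ℝ) + j))
    ∧ (∑' n : ℕ+, gHH 1 q n / (((n : ℝ) + m) * ((((n : ℕ) + m + l).choose l : ℕ) : ℝ))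
        = (gH 1 (m + l - q) - gH 1 (l - q)) / ((m : ℝ) * (((m + l - q).choose (l - q) : ℕ) : ℝ))) := by
  have hm0 : m ≠ 0 := by omega
  have hsum : ∑' n : ℕ+, gHH 1 q n / (((n : ℝ) + m) * ((((n : ℕ) + m + l).choose l : ℕ) : ℝ))
      = closedForm (l - q) m := by
    calc _ = ∑' n : ℕ+, gHH 1 q n * binomWeight l (n + m) := by
          simp [binomWeight, div_eq_mul_inv]
      _ = ∑' n : ℕ, gHH 1 q n * binomWeight l (n + m) :=
          tsum_pnat_eq_tsum_of_eq_zero (f := fun n ↦ gHH 1 q n * binomWeight l (n + m))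
            (by simp [gHH_apply_zero])
      _ = closedForm (l - q) m := (hasSum_gHH_mul_binomWeight hlq hm0).tsum_eq
  refine ⟨?_, ?_⟩
  · rw [hsum, eq_sum_alternating_choose_of_sub_succ closedForm (fun l _ ↦ closedForm_succ_left l)
      (l - q) hm0]
    simp [closedForm_zero_left, mul_div_assoc]
  · rw [hsum, closedForm, binomWeight, show m + l - q = m + (l - q) by omega]
    ring
end

section
/- For all integers m, l ≥ 1, Σ_{n=1}^∞ H_n^{(2)} / ((n+m)·C(n+m+l, l)) = π² / (6·m·C(m+l−1, l−1)) − Σ_{j=0}^{l−1} (−1)^j · C(l−1, j) · H_{m+j} / (m+j)². -/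
/-!
Write `l = k + 1` and `c x = k! / (x (x + 1) ⋯ (x + k))`. The weight `1 / ((n + m) C(n + m + l, l))`
is the telescoping difference `c (n + m) - c (n + m + 1)`, so summation by parts, together with
`H_n^{(2)} - H_{n-1}^{(2)} = 1 / n²`, turns the series into `∑_{n ≥ 1} c (n + m) / n²`.
Since `(-1)^k c` is the `k`-th forward difference of `1 / x`, it has the partial fraction expansion
`c x = ∑_j (-1)^j C(k, j) / (x + j)`, and each `∑_{n ≥ 1} 1 / (n² (n + a)) = ζ(2) / a - H_a / a²`
follows from `1 / (n (n + a)) = (1 / n - 1 / (n + a)) / a` by telescoping. Finally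
`c m = 1 / (m C(m + k, k))`.
-/

open Finset Real

open Filter Topology fwdDiff
open scoped Nat

theorem hasSum_mul_sub_succ_of_tendsto {R : Type*} [Ring R] [TopologicalSpace R]
    [IsTopologicalAddGroup R] [T2Space R] {f g : ℕ → R} {s : R}
    (hfg : Tendsto (fun n ↦ f n * g n) atTop (𝓝 0))
    (hs : HasSum (fun n ↦ (f (n + 1) - f n) * g (n + 1)) s)
    (hsum : Summable fun n ↦ f n * (g n - g (n + 1))) :
    HasSum (fun n ↦ f n * (g n - g (n + 1))) (f 0 * g 0 + s) := by
  have partial_sum (N : ℕ) : ∑ n ∈ range N, f n * (g n - g (n + 1)) =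
      f 0 * g 0 - f N * g N + ∑ n ∈ range N, (f (n + 1) - f n) * g (n + 1) := by
    induction N with
    | zero => simp
    | succ N ih => rw [sum_range_succ, sum_range_succ, ih]; noncomm_ring
  rw [hsum.hasSum_iff_tendsto_nat, funext partial_sum]
  simpa using (tendsto_const_nhds.sub hfg).add hs.tendsto_sum_nat

theorem Antitone.hasSum_sub_add {f : ℕ → ℝ} (hf : Antitone f) (h0 : Tendsto f atTop (𝓝 0))
    (a : ℕ) : HasSum (fun n ↦ f n - f (n + a)) (∑ i ∈ range a, f i) := by
  refine (hasSum_iff_tendsto_nat_of_nonneg (fun n ↦ sub_nonneg.2 (hf (n.le_add_right a))) _).2 ?_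
  have partial_sum (N : ℕ) : ∑ n ∈ range N, (f n - f (n + a)) =
      ∑ i ∈ range a, f i - ∑ i ∈ range a, f (N + i) := by
    have h := sum_range_add f N a
    rw [add_comm N a, sum_range_add] at h
    simp only [sum_sub_distrib, add_comm _ a]
    linarith
  have htail : Tendsto (fun N ↦ ∑ i ∈ range a, f (N + i)) atTop (𝓝 0) := by
    simpa using tendsto_finsetSum (range a) fun i _ ↦ h0.comp (tendsto_add_atTop_nat i)
  rw [funext partial_sum]
  simpa using tendsto_const_nhds.sub htail

/-- `k! / (x (x + 1) ⋯ (x + k))`, the Beta value `B(x, k + 1)`. -/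
noncomputable def recipPochhammer (k : ℕ) (x : ℝ) : ℝ := k ! / (ascPochhammer ℝ (k + 1)).eval x

theorem recipPochhammer_pos (k : ℕ) {x : ℝ} (hx : 0 < x) : 0 < recipPochhammer k x :=
  div_pos (by positivity) (ascPochhammer_pos _ _ hx)

theorem recipPochhammer_sub_add_one (k : ℕ) {x : ℝ} (hx : 0 < x) :
    recipPochhammer k x - recipPochhammer k (x + 1) = recipPochhammer (k + 1) x := by
  have hp := ascPochhammer_pos (k + 1) x hx
  have hq := ascPochhammer_pos (k + 1) (x + 1) (by linarith)
  have right : (ascPochhammer ℝ (k + 2)).eval x =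
      (ascPochhammer ℝ (k + 1)).eval x * (x + (k + 1 : ℕ)) := ascPochhammer_succ_eval _ _
  have left : (ascPochhammer ℝ (k + 2)).eval x = x * (ascPochhammer ℝ (k + 1)).eval (x + 1) := by
    simp [ascPochhammer_succ_left ℝ (k + 1)]
  rw [recipPochhammer, recipPochhammer, recipPochhammer, div_sub_div _ _ hp.ne' hq.ne',
    div_eq_div_iff (mul_pos hp hq).ne' (by rw [right]; positivity)]
  push_cast [Nat.factorial_succ] at right ⊢
  linear_combination (k ! * (ascPochhammer ℝ (k + 1)).eval (x + 1)) * right -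
    (k ! * (ascPochhammer ℝ (k + 1)).eval x) * left

theorem recipPochhammer_natCast (k N : ℕ) :
    recipPochhammer k N = 1 / (N * (N + k).choose k) := by
  have : (k ! : ℝ) ≠ 0 := by positivity
  rw [recipPochhammer, ascPochhammer_nat_eq_natCast_ascFactorial, Nat.ascFactorial_succ,
    ← Nat.succ_ascFactorial, Nat.ascFactorial_eq_factorial_mul_choose]
  push_cast
  field_simp

theorem fwdDiff_iter_inv (k : ℕ) {x : ℝ} (hx : 0 < x) :
    (Δ_[1])^[k] (fun y : ℝ ↦ y⁻¹) x = (-1) ^ k * recipPochhammer k x := by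
  induction k generalizing x with
  | zero => simp [recipPochhammer]
  | succ k ih =>
    rw [Function.iterate_succ_apply', fwdDiff, ih hx, ih (by linarith),
      ← recipPochhammer_sub_add_one k hx]
    ring

theorem sum_range_neg_one_pow_mul_choose_div (k : ℕ) {x : ℝ} (hx : 0 < x) :
    ∑ j ∈ range (k + 1), (-1) ^ j * k.choose j / (x + j) = recipPochhammer k x := by
  have h := fwdDiff_iter_eq_sum_shift 1 (fun y : ℝ ↦ y⁻¹) k x
  rw [fwdDiff_iter_inv k hx] at h
  have sign {j : ℕ} (hj : j ≤ k) : (-1 : ℝ) ^ k * (-1) ^ (k - j) = (-1) ^ j := by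
    obtain ⟨i, rfl⟩ := Nat.exists_eq_add_of_le hj
    rw [Nat.add_sub_cancel_left, pow_add, mul_assoc, ← mul_pow]
    norm_num
  calc ∑ j ∈ range (k + 1), (-1) ^ j * k.choose j / (x + j)
      = (-1) ^ k * ∑ j ∈ range (k + 1), ((-1 : ℤ) ^ (k - j) * k.choose j) • (x + j • 1)⁻¹ := by
        rw [mul_sum]
        refine sum_congr rfl fun j hj ↦ ?_
        rw [← sign (mem_range_succ_iff.1 hj)]
        simp only [zsmul_eq_mul, nsmul_one]
        push_cast
        ring
    _ = recipPochhammer k x := by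
        rw [← h, ← mul_assoc, ← mul_pow]
        norm_num

theorem tendsto_recipPochhammer_natCast_add (k : ℕ) {x : ℝ} (hx : 0 < x) :
    Tendsto (fun n : ℕ ↦ recipPochhammer k (n + x)) atTop (𝓝 0) := by
  have h (n : ℕ) := (sum_range_neg_one_pow_mul_choose_div k (x := n + x) (by positivity)).symm
  rw [funext h]
  have denom (j : ℕ) : Tendsto (fun n : ℕ ↦ (n : ℝ) + x + j) atTop atTop :=
    tendsto_atTop_add_const_right _ _ <|
      tendsto_atTop_add_const_right _ x tendsto_natCast_atTop_atTop
  simpa using tendsto_finsetSum (range (k + 1)) fun j _ ↦ tendsto_const_nhds.div_atTop (denom j)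

theorem gH_eq_sum_range (p : ℤ) (n : ℕ) : gH p n = ∑ i ∈ range n, (((i : ℝ) + 1) ^ p)⁻¹ := by
  rw [gH, ← Finset.Ico_add_one_right_eq_Icc, Finset.sum_Ico_eq_sum_range]
  simp [add_comm]

@[simp]
theorem gH_zero (p : ℤ) : gH p 0 = 0 := by simp [gH]

theorem gH_succ (p : ℤ) (n : ℕ) : gH p (n + 1) = gH p n + (((n : ℝ) + 1) ^ p)⁻¹ := by
  rw [gH_eq_sum_range, gH_eq_sum_range, sum_range_succ]

theorem gH_nonneg (p : ℤ) (n : ℕ) : 0 ≤ gH p n :=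
  sum_nonneg fun k _ ↦ by positivity

theorem hasSum_inv_succ_sq : HasSum (fun i : ℕ ↦ (((i : ℝ) + 1) ^ (2 : ℤ))⁻¹) (π ^ 2 / 6) := by
  simpa using (hasSum_nat_add_iff' 1).2 hasSum_zeta_two

theorem tendsto_gH_two : Tendsto (gH 2) atTop (𝓝 (π ^ 2 / 6)) := by
  simpa only [← gH_eq_sum_range] using hasSum_inv_succ_sq.tendsto_sum_nat

theorem gH_two_le (n : ℕ) : gH 2 n ≤ π ^ 2 / 6 := by
  rw [gH_eq_sum_range]
  exact sum_le_hasSum _ (fun i _ ↦ by positivity) hasSum_inv_succ_sq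

theorem hasSum_inv_succ_mul_succ_add {a : ℕ} (ha : 0 < a) :
    HasSum (fun n : ℕ ↦ 1 / (((n : ℝ) + 1) * ((n : ℝ) + 1 + a))) (gH 1 a / a) := by
  have anti : Antitone fun n : ℕ ↦ 1 / ((n : ℝ) + 1) := fun _ _ h ↦ by dsimp only; gcongr
  have tel : HasSum (fun n : ℕ ↦ 1 / ((n : ℝ) + 1) - 1 / (((n + a : ℕ) : ℝ) + 1)) (gH 1 a) := by
    simpa [gH_eq_sum_range] using anti.hasSum_sub_add tendsto_one_div_add_atTop_nhds_zero_nat a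
  refine (tel.div_const (a : ℝ)).congr_fun fun n ↦ ?_
  have : (a : ℝ) ≠ 0 := by positivity
  field_simp
  push_cast
  ring

theorem hasSum_inv_succ_sq_mul_succ_add {a : ℕ} (ha : 0 < a) :
    HasSum (fun n : ℕ ↦ 1 / (((n : ℝ) + 1) ^ 2 * ((n : ℝ) + 1 + a)))
      (π ^ 2 / 6 / a - gH 1 a / a ^ 2) := by
  have : (a : ℝ) ≠ 0 := by positivity
  rw [show π ^ 2 / 6 / a - gH 1 a / a ^ 2 = (π ^ 2 / 6 - gH 1 a / a) / a by ring]
  refine ((hasSum_inv_succ_sq.sub (hasSum_inv_succ_mul_succ_add ha)).div_const _).congr_fun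
    fun n ↦ ?_
  field_simp
  ring

theorem hasSum_recipPochhammer_div_sq (k : ℕ) {m : ℕ} (hm : 0 < m) :
    HasSum (fun n : ℕ ↦ recipPochhammer k (n + 1 + m) / ((n : ℝ) + 1) ^ 2)
      (π ^ 2 / 6 * recipPochhammer k m -
        ∑ j ∈ range (k + 1), (-1) ^ j * k.choose j * gH 1 (m + j) / ((m : ℝ) + j) ^ 2) := by
  have value : π ^ 2 / 6 * recipPochhammer k m -
      ∑ j ∈ range (k + 1), (-1) ^ j * k.choose j * gH 1 (m + j) / ((m : ℝ) + j) ^ 2 =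
      ∑ j ∈ range (k + 1), (-1) ^ j * k.choose j *
        (π ^ 2 / 6 / ((m + j : ℕ) : ℝ) - gH 1 (m + j) / ((m + j : ℕ) : ℝ) ^ 2) := by
    rw [← sum_range_neg_one_pow_mul_choose_div k (by positivity), mul_sum, ← sum_sub_distrib]
    refine sum_congr rfl fun j _ ↦ ?_
    push_cast
    ring
  rw [value]
  refine (hasSum_sum fun j _ ↦ (hasSum_inv_succ_sq_mul_succ_add (a := m + j) (by omega)).mul_left
    ((-1 : ℝ) ^ j * k.choose j)).congr_fun fun n ↦ ?_
  rw [← sum_range_neg_one_pow_mul_choose_div k (by positivity), sum_div]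
  refine sum_congr rfl fun j _ ↦ ?_
  push_cast
  field_simp
  ring

theorem hasSum_gH_two_mul_recipPochhammer_sub (k : ℕ) {m : ℕ} (hm : 0 < m) :
    HasSum (fun n : ℕ ↦ gH 2 n * (recipPochhammer k (n + m) - recipPochhammer k (n + 1 + m)))
      (π ^ 2 / 6 * recipPochhammer k m -
        ∑ j ∈ range (k + 1), (-1) ^ j * k.choose j * gH 1 (m + j) / ((m : ℝ) + j) ^ 2) := by
  set c : ℕ → ℝ := fun n ↦ recipPochhammer k (n + m)
  have c_sub (n : ℕ) :
      c n - c (n + 1) = recipPochhammer k (n + m) - recipPochhammer k (n + 1 + m) := by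
    simp only [c]
    push_cast
    rfl
  have c_anti : Antitone c := antitone_nat_of_succ_le fun n ↦ by
    rw [← sub_nonneg, c_sub, add_right_comm, recipPochhammer_sub_add_one k (by positivity)]
    exact (recipPochhammer_pos _ (by positivity)).le
  have c_lim : Tendsto c atTop (𝓝 0) := tendsto_recipPochhammer_natCast_add k (by positivity)
  have c_tel : HasSum (fun n ↦ c n - c (n + 1)) (c 0) := by
    simpa using c_anti.hasSum_sub_add c_lim 1
  have summable : Summable fun n ↦ gH 2 n * (c n - c (n + 1)) :=
    .of_nonneg_of_le (fun n ↦ mul_nonneg (gH_nonneg 2 n) (sub_nonneg.2 (c_anti n.le_succ)))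
      (fun n ↦ mul_le_mul_of_nonneg_right (gH_two_le n) (sub_nonneg.2 (c_anti n.le_succ)))
      (c_tel.summable.mul_left _)
  have parts := hasSum_mul_sub_succ_of_tendsto (by simpa using tendsto_gH_two.mul c_lim)
    ((hasSum_recipPochhammer_div_sq k hm).congr_fun fun n ↦ by
      rw [gH_succ, add_sub_cancel_left, zpow_ofNat]
      simp only [c]
      push_cast
      ring) summable
  simpa [c_sub] using parts

/-- The case `p = 2`. -/
theorem stmt_11 (m l : ℕ) (hm : 1 ≤ m) (hl : 1 ≤ l) :
    ∑' n : ℕ+, gH 2 n / (((n : ℝ) + m) * ((((n : ℕ) + m + l).choose l : ℕ) : ℝ))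
      = Real.pi ^ 2 / (6 * (m : ℝ) * (((m + l - 1).choose (l - 1) : ℕ) : ℝ))
        - ∑ j ∈ Finset.range l,
            (-1 : ℝ) ^ j * ((l - 1).choose j : ℝ) * gH 1 (m + j) / ((m : ℝ) + j) ^ 2 := by
  obtain ⟨k, rfl⟩ := Nat.exists_eq_add_of_le' hl
  have weight (n : ℕ) : gH 2 n / (((n : ℝ) + m) * ((n + m + (k + 1)).choose (k + 1) : ℕ)) =
      gH 2 n * (recipPochhammer k (n + m) - recipPochhammer k (n + 1 + m)) := by
    rw [add_right_comm (n : ℝ), recipPochhammer_sub_add_one k (by positivity),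
      ← Nat.cast_add, recipPochhammer_natCast, add_assoc n m, mul_one_div]
  rw [tsum_pnat_eq_tsum_of_eq_zero
      (f := fun n : ℕ ↦ gH 2 n / (((n : ℝ) + m) * ((n + m + (k + 1)).choose (k + 1) : ℕ)))
      (by simp), tsum_congr weight,
    (hasSum_gH_two_mul_recipPochhammer_sub k hm).tsum_eq, Nat.add_sub_cancel, ← add_assoc,
    Nat.add_sub_cancel, recipPochhammer_natCast]
  ring
end
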